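/- For any two Liouville numbers ξ and η, there exists a Liouville number ρ such that both {ξ, ρ} and {η, ρ} are Liouville sets; moreover the set of such ρ has the cardinality of the continuum. -/

import Mathlib

open Filter

/-- Distance from a real number to the nearest integer. -/
noncomputable def distNearestInt (x : ℝ) : ℝ := |x - round x|

/-- The Liouville set `S_{q,u}` attached to a sequence `q` of positive integers and a
sequence `u` of positive reals. -/
def LSet (q : ℕ → ℕ) (u : ℕ → ℝ) : Set ℝ :=
  {ξ : ℝ | Irrational ξ ∧ ∃ κ₁ κ₂ : ℝ, 0 < κ₁ ∧ 0 < κ₂ ∧ ∃ b : ℕ → ℕ,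
    ∀ᶠ n in Filter.atTop, 1 ≤ b n ∧ (b n : ℝ) ≤ (q n : ℝ) ^ κ₁ ∧
      distNearestInt ((b n : ℝ) * ξ) ≤ (q n : ℝ) ^ (-(κ₂ * u n))}

/-- A Liouville set: a set of Liouville numbers admitting a common approximation sequence. -/
def IsLiouvilleSet (S : Set ℝ) : Prop :=
  (∀ ξ ∈ S, Liouville ξ) ∧
  ∃ q : ℕ → ℕ, StrictMono q ∧ (∀ n, 0 < q n) ∧
    ∀ ξ ∈ S, ∃ κ₁ κ₂ : ℝ, 0 < κ₁ ∧ 0 < κ₂ ∧ ∃ b : ℕ → ℕ,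
      ∀ᶠ n in Filter.atTop, 1 ≤ b n ∧ (b n : ℝ) ≤ (q n : ℝ) ^ κ₁ ∧
        distNearestInt ((b n : ℝ) * ξ) ≤ (q n : ℝ) ^ (-(κ₂ * n))

/-!
Put `M 0 = 2` and `M (n + 1) = 4 M n (q n r n) ^ (n + 1)`, where `q n, r n > M n` satisfy
`‖q n ξ‖ < q n ^ (-n)` and `‖r n η‖ < r n ^ (-n)`. For digits `ε k ∈ {1, 2}` let
`ρ = ∑ ε k / M k`. Since `M k ∣ M n` for `k ≤ n`, `M n` times the `n`-th partial sum is an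
integer, and the tail is positive and at most `4 / M (n + 1)`; hence
`0 < ‖M n ρ‖ ≤ 4 M n / M (n + 1) ≤ q n ^ (-n), r n ^ (-n)`. So `ρ` is Liouville, `{ξ, ρ}` is a
Liouville set along `(q n)` (denominators `q n` and `M n ≤ q n`), and `{η, ρ}` along `(r n)`.
The tail is below `1 / (2 M n)`, so `⌊M n ρ⌋` recovers the partial sums and thus the digits:
distinct digit sequences give distinct `ρ`, and there are continuum many of them.
-/

lemma distNearestInt_le_abs_sub (x : ℝ) (m : ℤ) : distNearestInt x ≤ |x - m| := round_le x m

lemma abs_mul_sub_eq_mul_abs_sub_div {b : ℝ} (hb : 0 < b) (x a : ℝ) :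
    |b * x - a| = b * |x - a / b| := by
  rw [show b * x - a = b * (x - a / b) by field_simp, abs_mul, abs_of_pos hb]

lemma Liouville.exists_gt_distNearestInt_lt {x : ℝ} (hx : Liouville x) (n N : ℕ) :
    ∃ b : ℕ, N < b ∧ distNearestInt (b * x) < 1 / (b : ℝ) ^ n := by
  obtain ⟨b, hNb, a, -, hab⟩ := frequently_atTop'.1 (hx.frequently_exists_num (n + 1)) N
  refine ⟨b, hNb, (distNearestInt_le_abs_sub _ a).trans_lt ?_⟩
  have hb : (0 : ℝ) < b := by exact_mod_cast (Nat.zero_le N).trans_lt hNb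
  calc |b * x - a| = b * |x - a / b| := abs_mul_sub_eq_mul_abs_sub_div hb x a
    _ < b * (1 / (b : ℝ) ^ (n + 1)) := by gcongr
    _ = 1 / (b : ℝ) ^ n := by field_simp; ring

lemma liouville_of_forall_exists_abs_mul_sub_le {x : ℝ}
    (h : ∀ n : ℕ, ∃ (a : ℤ) (b : ℕ), 2 ≤ b ∧ 0 < |b * x - a| ∧ |b * x - a| ≤ 1 / (b : ℝ) ^ n) :
    Liouville x := by
  intro n
  obtain ⟨a, b, hb, hpos, hle⟩ := h n
  have hb1 : (1 : ℝ) < b := by exact_mod_cast hb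
  rw [abs_mul_sub_eq_mul_abs_sub_div (by positivity)] at hpos hle
  refine ⟨a, b, by exact_mod_cast hb, ?_, ?_⟩ <;> push_cast
  · intro hx
    rw [hx, sub_self, abs_zero, mul_zero] at hpos
    exact lt_irrefl 0 hpos
  · exact (lt_mul_left (pos_of_mul_pos_right hpos (by positivity)) hb1).trans_le hle

lemma isLiouvilleSet_of_forall_exists {S : Set ℝ} (hS : ∀ ξ ∈ S, Liouville ξ) {q : ℕ → ℕ}
    (hq : StrictMono q) (hq0 : ∀ n, 0 < q n)
    (happrox : ∀ ξ ∈ S, ∃ b : ℕ → ℕ, ∀ n, 1 ≤ b n ∧ b n ≤ q n ∧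
      distNearestInt (b n * ξ) ≤ 1 / (q n : ℝ) ^ n) :
    IsLiouvilleSet S := by
  refine ⟨hS, q, hq, hq0, fun ξ hξ => ?_⟩
  obtain ⟨b, hb⟩ := happrox ξ hξ
  refine ⟨1, 1, one_pos, one_pos, b, Eventually.of_forall fun n => ⟨(hb n).1, ?_, ?_⟩⟩
  · rw [Real.rpow_one]
    exact_mod_cast (hb n).2.1
  · rw [one_mul, Real.rpow_neg (Nat.cast_nonneg _), Real.rpow_natCast, ← one_div]
    exact (hb n).2.2

structure IsLacunaryDivisorChain (M : ℕ → ℕ) : Prop where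
  pos : ∀ n, 0 < M n
  eight_mul_le : ∀ n, 8 * M n ≤ M (n + 1)
  dvd_succ : ∀ n, M n ∣ M (n + 1)

noncomputable def digitTerm (M : ℕ → ℕ) (σ : ℕ → Bool) (k : ℕ) : ℝ :=
  (if σ k then 2 else 1) / M k

noncomputable def digitSeries (M : ℕ → ℕ) (σ : ℕ → Bool) : ℝ :=
  ∑' k, digitTerm M σ k

lemma digitTerm_le (M : ℕ → ℕ) (σ : ℕ → Bool) (k : ℕ) : digitTerm M σ k ≤ 2 / M k := by
  unfold digitTerm
  gcongr
  split <;> norm_num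

namespace IsLacunaryDivisorChain

open Finset

variable {M : ℕ → ℕ}

lemma two_pow_mul_le (hM : IsLacunaryDivisorChain M) (n k : ℕ) : 2 ^ k * M n ≤ M (n + k) := by
  induction k with
  | zero => simp
  | succ k ih =>
    calc 2 ^ (k + 1) * M n = 2 * (2 ^ k * M n) := by ring
      _ ≤ 8 * M (n + k) := by omega
      _ ≤ M (n + (k + 1)) := hM.eight_mul_le _

lemma dvd_of_le (hM : IsLacunaryDivisorChain M) {k n : ℕ} (h : k ≤ n) : M k ∣ M n :=
  Nat.rel_of_forall_rel_succ_of_le (· ∣ ·) hM.dvd_succ h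

lemma digitTerm_pos (hM : IsLacunaryDivisorChain M) (σ : ℕ → Bool) (k : ℕ) :
    0 < digitTerm M σ k := by
  have := hM.pos k
  unfold digitTerm
  split <;> positivity

lemma digitTerm_add_le (hM : IsLacunaryDivisorChain M) (σ : ℕ → Bool) (n k : ℕ) :
    digitTerm M σ (k + n) ≤ 2 / M n * (1 / 2) ^ k := by
  have hMn : (0 : ℝ) < M n := by exact_mod_cast hM.pos n
  have hgrow : (2 : ℝ) ^ k * M n ≤ M (k + n) := by
    rw [add_comm]
    exact_mod_cast hM.two_pow_mul_le n k
  calc digitTerm M σ (k + n) ≤ 2 / M (k + n) := digitTerm_le M σ _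
    _ ≤ 2 / (2 ^ k * M n) := by gcongr
    _ = 2 / M n * (1 / 2) ^ k := by rw [one_div_pow]; field_simp

lemma summable_digitTerm (hM : IsLacunaryDivisorChain M) (σ : ℕ → Bool) :
    Summable (digitTerm M σ) :=
  Summable.of_nonneg_of_le (fun k => (hM.digitTerm_pos σ k).le)
    (fun k => by simpa using hM.digitTerm_add_le σ 0 k) (summable_geometric_two.mul_left _)

lemma digitSeries_sub_sum_eq_tsum (hM : IsLacunaryDivisorChain M) (σ : ℕ → Bool) (n : ℕ) :
    digitSeries M σ - ∑ k ∈ range (n + 1), digitTerm M σ k =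
      ∑' k, digitTerm M σ (k + (n + 1)) := by
  rw [digitSeries, ← (hM.summable_digitTerm σ).sum_add_tsum_nat_add (n + 1), add_sub_cancel_left]

lemma digitSeries_sub_sum_pos (hM : IsLacunaryDivisorChain M) (σ : ℕ → Bool) (n : ℕ) :
    0 < digitSeries M σ - ∑ k ∈ range (n + 1), digitTerm M σ k := by
  rw [hM.digitSeries_sub_sum_eq_tsum]
  exact ((summable_nat_add_iff (n + 1)).2 (hM.summable_digitTerm σ)).tsum_pos
    (fun k => (hM.digitTerm_pos σ _).le) 0 (hM.digitTerm_pos σ _)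

lemma digitSeries_sub_sum_le (hM : IsLacunaryDivisorChain M) (σ : ℕ → Bool) (n : ℕ) :
    digitSeries M σ - ∑ k ∈ range (n + 1), digitTerm M σ k ≤ 4 / M (n + 1) := by
  rw [hM.digitSeries_sub_sum_eq_tsum]
  calc ∑' k, digitTerm M σ (k + (n + 1)) ≤ ∑' k, 2 / M (n + 1) * (1 / 2 : ℝ) ^ k :=
        ((summable_nat_add_iff (n + 1)).2 (hM.summable_digitTerm σ)).tsum_le_tsum
          (hM.digitTerm_add_le σ (n + 1)) (summable_geometric_two.mul_left _)
    _ = 4 / M (n + 1) := by rw [tsum_mul_left, tsum_geometric_two]; ring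

lemma exists_int_eq_mul_sum (hM : IsLacunaryDivisorChain M) (σ : ℕ → Bool) (n : ℕ) :
    ∃ P : ℤ, (P : ℝ) = M n * ∑ k ∈ range (n + 1), digitTerm M σ k := by
  refine ⟨∑ k ∈ range (n + 1), (if σ k then 2 else 1) * ((M n / M k : ℕ) : ℤ), ?_⟩
  rw [mul_sum, Int.cast_sum]
  refine sum_congr rfl fun k hk => ?_
  have hMk : (M k : ℝ) ≠ 0 := by exact_mod_cast (hM.pos k).ne'
  rw [Int.cast_mul, Int.cast_natCast,
    Nat.cast_div (hM.dvd_of_le (Nat.lt_succ_iff.1 (mem_range.1 hk))) hMk, digitTerm]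
  split <;> push_cast <;> field_simp

lemma mul_digitSeries_sub_sum_le (hM : IsLacunaryDivisorChain M) (σ : ℕ → Bool) (n : ℕ) :
    M n * (digitSeries M σ - ∑ k ∈ range (n + 1), digitTerm M σ k) ≤ 4 * M n / M (n + 1) := by
  calc M n * (digitSeries M σ - ∑ k ∈ range (n + 1), digitTerm M σ k)
      ≤ M n * (4 / M (n + 1)) := by gcongr; exact hM.digitSeries_sub_sum_le σ n
    _ = 4 * M n / M (n + 1) := by ring

lemma exists_int_mul_digitSeries_sub_pos_le (hM : IsLacunaryDivisorChain M) (σ : ℕ → Bool) (n : ℕ) :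
    ∃ P : ℤ, 0 < M n * digitSeries M σ - P ∧ M n * digitSeries M σ - P ≤ 4 * M n / M (n + 1) := by
  obtain ⟨P, hP⟩ := hM.exists_int_eq_mul_sum σ n
  have hMn : (0 : ℝ) < M n := by exact_mod_cast hM.pos n
  refine ⟨P, ?_, ?_⟩ <;> rw [hP, ← mul_sub]
  · exact mul_pos hMn (hM.digitSeries_sub_sum_pos σ n)
  · exact hM.mul_digitSeries_sub_sum_le σ n

lemma distNearestInt_mul_digitSeries_le (hM : IsLacunaryDivisorChain M) (σ : ℕ → Bool)
    (n : ℕ) : distNearestInt (M n * digitSeries M σ) ≤ 4 * M n / M (n + 1) := by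
  obtain ⟨P, hpos, hle⟩ := hM.exists_int_mul_digitSeries_sub_pos_le σ n
  exact (distNearestInt_le_abs_sub _ P).trans ((abs_of_pos hpos).trans_le hle)

lemma sum_digitTerm_eq_floor_div (hM : IsLacunaryDivisorChain M) (σ : ℕ → Bool) (n : ℕ) :
    ∑ k ∈ range (n + 1), digitTerm M σ k = ⌊M n * digitSeries M σ⌋ / M n := by
  obtain ⟨P, hP⟩ := hM.exists_int_eq_mul_sum σ n
  have hMn : (0 : ℝ) < M n := by exact_mod_cast hM.pos n
  have hpos := mul_pos hMn (hM.digitSeries_sub_sum_pos σ n)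
  have hle := hM.mul_digitSeries_sub_sum_le σ n
  have hhalf : 4 * (M n : ℝ) / M (n + 1) ≤ 1 / 2 := by
    rw [div_le_iff₀ (by exact_mod_cast hM.pos (n + 1))]
    have : (8 * M n : ℝ) ≤ M (n + 1) := by exact_mod_cast hM.eight_mul_le n
    linarith
  rw [mul_sub, ← hP] at hpos hle
  rw [Int.floor_eq_iff.2 ⟨by linarith, by linarith⟩, hP, mul_div_cancel_left₀ _ hMn.ne']

lemma digitSeries_injective (hM : IsLacunaryDivisorChain M) :
    Function.Injective (digitSeries M) := by
  intro σ τ h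
  have hsum (n : ℕ) :
      ∑ k ∈ range (n + 1), digitTerm M σ k = ∑ k ∈ range (n + 1), digitTerm M τ k := by
    rw [hM.sum_digitTerm_eq_floor_div, hM.sum_digitTerm_eq_floor_div, h]
  have hterm (n : ℕ) : digitTerm M σ n = digitTerm M τ n := by
    cases n with
    | zero => simpa using hsum 0
    | succ n =>
      have := hsum (n + 1)
      rw [sum_range_succ _ (n + 1), sum_range_succ _ (n + 1), hsum n] at this
      linarith
  funext n
  have hMn : (M n : ℝ) ≠ 0 := by exact_mod_cast (hM.pos n).ne'
  have := hterm n
  rw [digitTerm, digitTerm, div_left_inj' hMn] at this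
  revert this
  cases σ n <;> cases τ n <;> norm_num

end IsLacunaryDivisorChain

noncomputable def Liouville.denom {x : ℝ} (hx : Liouville x) (n N : ℕ) : ℕ :=
  (hx.exists_gt_distNearestInt_lt n N).choose

lemma Liouville.lt_denom {x : ℝ} (hx : Liouville x) (n N : ℕ) : N < hx.denom n N :=
  (hx.exists_gt_distNearestInt_lt n N).choose_spec.1

lemma Liouville.distNearestInt_denom_lt {x : ℝ} (hx : Liouville x) (n N : ℕ) :
    distNearestInt (hx.denom n N * x) < 1 / (hx.denom n N : ℝ) ^ n :=
  (hx.exists_gt_distNearestInt_lt n N).choose_spec.2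

noncomputable def companionScale {ξ η : ℝ} (hξ : Liouville ξ) (hη : Liouville η) : ℕ → ℕ
  | 0 => 2
  | n + 1 => 4 * companionScale hξ hη n *
      (hξ.denom n (companionScale hξ hη n) * hη.denom n (companionScale hξ hη n)) ^ (n + 1)

section companionScale

variable {ξ η : ℝ} (hξ : Liouville ξ) (hη : Liouville η)

lemma companionScale_succ (n : ℕ) :
    companionScale hξ hη (n + 1) = 4 * companionScale hξ hη n *
      (hξ.denom n (companionScale hξ hη n) * hη.denom n (companionScale hξ hη n)) ^ (n + 1) :=
  rfl

lemma companionScale_comm : companionScale hξ hη = companionScale hη hξ := by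
  funext n
  induction n with
  | zero => rfl
  | succ n ih => rw [companionScale_succ, companionScale_succ, ih, mul_comm (hξ.denom _ _)]

lemma denom_le_denom_mul_denom (n : ℕ) :
    hξ.denom n (companionScale hξ hη n) ≤
      hξ.denom n (companionScale hξ hη n) * hη.denom n (companionScale hξ hη n) :=
  Nat.le_mul_of_pos_right _ (Nat.zero_lt_of_lt (hη.lt_denom _ _))

lemma two_le_companionScale (n : ℕ) : 2 ≤ companionScale hξ hη n := by
  induction n with
  | zero => exact le_rfl
  | succ n ih =>
    rw [companionScale_succ]
    have := Nat.one_le_pow (n + 1) _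
      ((Nat.zero_lt_of_lt (hξ.lt_denom _ _)).trans_le (denom_le_denom_mul_denom hξ hη n))
    nlinarith

lemma isLacunaryDivisorChain_companionScale : IsLacunaryDivisorChain (companionScale hξ hη) where
  pos n := by have := two_le_companionScale hξ hη n; omega
  eight_mul_le n := by
    have hX := (two_le_companionScale hξ hη n).trans
      ((hξ.lt_denom n _).trans_le (denom_le_denom_mul_denom hξ hη n)).le
    rw [companionScale_succ]
    calc 8 * companionScale hξ hη n = 4 * companionScale hξ hη n * 2 := by ring
      _ ≤ _ := by gcongr; exact hX.trans (Nat.le_self_pow n.succ_ne_zero _)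
  dvd_succ n := by
    rw [companionScale_succ, mul_comm 4, mul_assoc]
    exact dvd_mul_right _ _

lemma denom_le_companionScale_succ (n : ℕ) :
    hξ.denom n (companionScale hξ hη n) ≤ companionScale hξ hη (n + 1) := by
  rw [companionScale_succ]
  refine (denom_le_denom_mul_denom hξ hη n).trans ((Nat.le_self_pow n.succ_ne_zero _).trans ?_)
  exact Nat.le_mul_of_pos_left _ (by have := two_le_companionScale hξ hη n; omega)

lemma strictMono_denom_companionScale :
    StrictMono fun n => hξ.denom n (companionScale hξ hη n) :=
  strictMono_nat_of_lt_succ fun n =>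
    (denom_le_companionScale_succ hξ hη n).trans_lt (hξ.lt_denom _ _)

lemma four_mul_div_companionScale_succ_le (n : ℕ) :
    4 * (companionScale hξ hη n : ℝ) / companionScale hξ hη (n + 1) ≤
      1 / (hξ.denom n (companionScale hξ hη n) : ℝ) ^ n := by
  have hq := Nat.zero_lt_of_lt (hξ.lt_denom n (companionScale hξ hη n))
  have hpow := (Nat.pow_le_pow_right hq n.le_succ).trans
    (Nat.pow_le_pow_left (denom_le_denom_mul_denom hξ hη n) (n + 1))
  have hM : (0 : ℝ) < companionScale hξ hη n := by
    exact_mod_cast (two_le_companionScale hξ hη n).trans_lt' two_pos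
  rw [companionScale_succ]
  push_cast
  rw [← div_div, div_self (by positivity)]
  exact one_div_le_one_div_of_le (by exact_mod_cast pow_pos hq n) (by exact_mod_cast hpow)

lemma liouville_digitSeries_companionScale (σ : ℕ → Bool) :
    Liouville (digitSeries (companionScale hξ hη) σ) := by
  refine liouville_of_forall_exists_abs_mul_sub_le fun n => ?_
  obtain ⟨P, hpos, hle⟩ :=
    (isLacunaryDivisorChain_companionScale hξ hη).exists_int_mul_digitSeries_sub_pos_le σ n
  refine ⟨P, companionScale hξ hη n, two_le_companionScale hξ hη n, abs_pos_of_pos hpos, ?_⟩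
  rw [abs_of_pos hpos]
  refine hle.trans ((four_mul_div_companionScale_succ_le hξ hη n).trans ?_)
  have := two_le_companionScale hξ hη n
  gcongr
  exact (hξ.lt_denom _ _).le

lemma isLiouvilleSet_pair_digitSeries_companionScale (σ : ℕ → Bool) :
    IsLiouvilleSet {ξ, digitSeries (companionScale hξ hη) σ} := by
  refine isLiouvilleSet_of_forall_exists ?_ (strictMono_denom_companionScale hξ hη)
    (fun n => Nat.zero_lt_of_lt (hξ.lt_denom _ _)) ?_
  · rintro _ (rfl | rfl)
    exacts [hξ, liouville_digitSeries_companionScale hξ hη σ]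
  · rintro _ (rfl | rfl)
    · exact ⟨_, fun n => ⟨Nat.one_le_of_lt (hξ.lt_denom _ _), le_rfl,
        (hξ.distNearestInt_denom_lt _ _).le⟩⟩
    · refine ⟨companionScale hξ hη, fun n => ⟨?_, (hξ.lt_denom _ _).le, ?_⟩⟩
      · have := two_le_companionScale hξ hη n; omega
      · exact ((isLacunaryDivisorChain_companionScale hξ hη).distNearestInt_mul_digitSeries_le
          σ n).trans (four_mul_div_companionScale_succ_le hξ hη n)

end companionScale

/-- Any two Liouville numbers admit continuum many common companions. -/
theorem liouville_common_companions (ξ η : ℝ) (hξ : Liouville ξ) (hη : Liouville η) :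
    (∃ ρ : ℝ, Liouville ρ ∧ IsLiouvilleSet {ξ, ρ} ∧ IsLiouvilleSet {η, ρ}) ∧
      Cardinal.mk {ρ : ℝ | Liouville ρ ∧ IsLiouvilleSet {ξ, ρ} ∧ IsLiouvilleSet {η, ρ}} =
        Cardinal.continuum := by
  have hmem (σ : ℕ → Bool) : digitSeries (companionScale hξ hη) σ ∈
      {ρ : ℝ | Liouville ρ ∧ IsLiouvilleSet {ξ, ρ} ∧ IsLiouvilleSet {η, ρ}} := by
    refine ⟨liouville_digitSeries_companionScale hξ hη σ,
      isLiouvilleSet_pair_digitSeries_companionScale hξ hη σ, ?_⟩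
    rw [companionScale_comm]
    exact isLiouvilleSet_pair_digitSeries_companionScale hη hξ σ
  refine ⟨⟨_, hmem fun _ => false⟩, le_antisymm ?_ ?_⟩
  · exact (Cardinal.mk_subtype_le _).trans_eq Cardinal.mk_real
  · have hinj : Function.Injective fun σ => (⟨_, hmem σ⟩ :
        {ρ : ℝ | Liouville ρ ∧ IsLiouvilleSet {ξ, ρ} ∧ IsLiouvilleSet {η, ρ}}) :=
      fun σ τ h => (isLacunaryDivisorChain_companionScale hξ hη).digitSeries_injective
        (congrArg Subtype.val h)
    calc Cardinal.continuum = Cardinal.mk (ℕ → Bool) := by simp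
      _ ≤ _ := Cardinal.mk_le_of_injective hinj
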